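/- Let ν > 0, y₀ ∈ ℝ, t ∈ ℝ, and define x(x̂) = x̂ + (1/ν)(1 − tanh(2ν(x̂ + t/(4ν²) − y₀))) for x̂ ∈ ℝ. Then the function x̂ ↦ x(x̂) is not injective on ℝ. In particular its derivative equals 2·tanh²(2ν(x̂ + t/(4ν²) − y₀)) − 1, which is negative at the point where the argument of tanh vanishes and tends to 1 as x̂ → ±∞. -/

import Mathlib

/-- The phase `φ(x̂,t) = 2ν(x̂ + t/(4ν²) − y₀)` of the one-soliton. -/
noncomputable def solPhi (ν y₀ xh t : ℝ) : ℝ := 2 * ν * (xh + t / (4 * ν ^ 2) - y₀)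

/-- The parametrized spatial variable `x(x̂,t) = x̂ + (1/ν)(1 − tanh φ)`. -/
noncomputable def solX (ν y₀ xh t : ℝ) : ℝ :=
  xh + (1 / ν) * (1 - Real.tanh (solPhi ν y₀ xh t))

open Filter Function Topology

/-!
The derivative of `x̂ ↦ x(x̂)` is `2 tanh² φ − 1 = 1 − 2 / cosh² φ`: it equals `−1` where `φ = 0`
and tends to `1` as `x̂ → ±∞`. A continuous injective function on `ℝ` is strictly monotone, so its
derivative cannot take both signs.
-/

theorem not_injective_of_deriv_neg_of_deriv_pos {f : ℝ → ℝ} (hf : Continuous f) {a b : ℝ}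
    (ha : deriv f a < 0) (hb : 0 < deriv f b) : ¬ Injective f := fun hinj =>
  (hf.strictMono_of_inj hinj).elim (fun h => ha.not_ge h.monotone.deriv_nonneg)
    (fun h => hb.not_ge h.antitone.deriv_nonpos)

namespace Real

theorem one_sub_tanh_sq (x : ℝ) : 1 - tanh x ^ 2 = (cosh x ^ 2)⁻¹ := by
  have hcosh := cosh_pos x
  rw [tanh_eq_sinh_div_cosh, div_pow]
  field_simp
  linarith [cosh_sq_sub_sinh_sq x]

theorem hasDerivAt_tanh (x : ℝ) : HasDerivAt tanh (1 - tanh x ^ 2) x := by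
  have hquot := (hasDerivAt_sinh x).div (hasDerivAt_cosh x) (cosh_pos x).ne'
  rw [show sinh / cosh = tanh from funext fun y => (tanh_eq_sinh_div_cosh y).symm] at hquot
  refine hquot.congr_deriv ?_
  rw [one_sub_tanh_sq, inv_eq_one_div, ← cosh_sq_sub_sinh_sq x]
  ring

theorem tendsto_cosh_atTop : Tendsto cosh atTop atTop := by
  refine tendsto_atTop_mono (fun x => ?_) (tendsto_exp_atTop.atTop_div_const two_pos)
  rw [cosh_eq]
  gcongr
  exact le_add_of_nonneg_right (exp_pos _).le

theorem tendsto_tanh_sq_atTop : Tendsto (fun x => tanh x ^ 2) atTop (𝓝 1) := by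
  have hinv : Tendsto (fun x => (cosh x ^ 2)⁻¹) atTop (𝓝 0) :=
    ((tendsto_pow_atTop two_ne_zero).comp tendsto_cosh_atTop).inv_tendsto_atTop
  simpa [← one_sub_tanh_sq] using hinv.const_sub 1

theorem tendsto_tanh_sq_atBot : Tendsto (fun x => tanh x ^ 2) atBot (𝓝 1) := by
  simpa [Function.comp_def] using tendsto_tanh_sq_atTop.comp tendsto_neg_atBot_atTop

end Real

section OneSoliton

variable (ν y₀ t : ℝ)

theorem solPhi_center_eq_zero : solPhi ν y₀ (y₀ - t / (4 * ν ^ 2)) t = 0 := by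
  simp [solPhi]

theorem hasDerivAt_solPhi (xh : ℝ) : HasDerivAt (fun y => solPhi ν y₀ y t) (2 * ν) xh := by
  simpa [solPhi] using
    ((hasDerivAt_id' xh).add_const (t / (4 * ν ^ 2)) |>.sub_const y₀).const_mul (2 * ν)

theorem tendsto_solPhi_atTop (hν : 0 < ν) : Tendsto (fun y => solPhi ν y₀ y t) atTop atTop := by
  refine Tendsto.const_mul_atTop (by positivity) ?_
  simpa only [id, add_sub_assoc] using
    tendsto_atTop_add_const_right atTop (t / (4 * ν ^ 2) - y₀) tendsto_id

theorem tendsto_solPhi_atBot (hν : 0 < ν) : Tendsto (fun y => solPhi ν y₀ y t) atBot atBot := by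
  refine Tendsto.const_mul_atBot (by positivity) ?_
  simpa only [id, add_sub_assoc] using
    tendsto_atBot_add_const_right atBot (t / (4 * ν ^ 2) - y₀) tendsto_id

theorem hasDerivAt_solX (hν : ν ≠ 0) (xh : ℝ) :
    HasDerivAt (fun y => solX ν y₀ y t) (2 * Real.tanh (solPhi ν y₀ xh t) ^ 2 - 1) xh := by
  have htanh := (Real.hasDerivAt_tanh _).comp xh (hasDerivAt_solPhi ν y₀ t xh)
  refine ((hasDerivAt_id' xh).add ((htanh.const_sub 1).const_mul (1 / ν))).congr_deriv ?_
  field_simp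
  ring

theorem deriv_solX (hν : ν ≠ 0) (xh : ℝ) :
    deriv (fun y => solX ν y₀ y t) xh = 2 * Real.tanh (solPhi ν y₀ xh t) ^ 2 - 1 :=
  (hasDerivAt_solX ν y₀ t hν xh).deriv

theorem differentiable_solX (hν : ν ≠ 0) : Differentiable ℝ (fun y => solX ν y₀ y t) :=
  fun xh => (hasDerivAt_solX ν y₀ t hν xh).differentiableAt

theorem tendsto_deriv_solX {l : Filter ℝ} (hν : ν ≠ 0)
    (h : Tendsto (fun xh => Real.tanh (solPhi ν y₀ xh t) ^ 2) l (𝓝 1)) :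
    Tendsto (fun xh => deriv (fun y => solX ν y₀ y t) xh) l (𝓝 1) := by
  simp_rw [deriv_solX ν y₀ t hν]
  convert (h.const_mul 2).sub_const 1
  norm_num

end OneSoliton

/-- The map `x̂ ↦ x(x̂) = x̂ + (1/ν)(1 − tanh(2ν(x̂ + t/(4ν²) − y₀)))` is not injective;
its derivative is `2 tanh²(2ν(x̂ + t/(4ν²) − y₀)) − 1`, which is negative at the point
where the argument of `tanh` vanishes and tends to `1` as `x̂ → ±∞`. -/
theorem one_soliton_loop (ν y₀ t : ℝ) (hν : 0 < ν) :
    ¬ Function.Injective (fun xh => solX ν y₀ xh t) ∧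
    (∀ xh : ℝ, deriv (fun y => solX ν y₀ y t) xh
      = 2 * Real.tanh (2 * ν * (xh + t / (4 * ν ^ 2) - y₀)) ^ 2 - 1) ∧
    deriv (fun y => solX ν y₀ y t) (y₀ - t / (4 * ν ^ 2)) < 0 ∧
    Filter.Tendsto (fun xh => deriv (fun y => solX ν y₀ y t) xh) Filter.atTop (nhds 1) ∧
    Filter.Tendsto (fun xh => deriv (fun y => solX ν y₀ y t) xh) Filter.atBot (nhds 1) := by
  have hderiv := deriv_solX ν y₀ t hν.ne'
  have hneg : deriv (fun y => solX ν y₀ y t) (y₀ - t / (4 * ν ^ 2)) < 0 := by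
    rw [hderiv, solPhi_center_eq_zero, Real.tanh_zero]
    norm_num
  have htop := tendsto_deriv_solX ν y₀ t hν.ne'
    (Real.tendsto_tanh_sq_atTop.comp (tendsto_solPhi_atTop ν y₀ t hν))
  have hbot := tendsto_deriv_solX ν y₀ t hν.ne'
    (Real.tendsto_tanh_sq_atBot.comp (tendsto_solPhi_atBot ν y₀ t hν))
  obtain ⟨b, hpos⟩ := (htop.eventually (lt_mem_nhds one_pos)).exists
  exact ⟨not_injective_of_deriv_neg_of_deriv_pos (differentiable_solX ν y₀ t hν.ne').continuous
    hneg hpos, hderiv, hneg, htop, hbot⟩
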